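/- A finite subset τ ⊆ ℤ×ℤ is a connected skew shape if and only if: (i) whenever u,v ∈ τ with u ↘ v, every S/E lattice path from u to v is contained in τ, and (ii) whenever u,v ∈ τ with u ↗ v, there exists an N/E lattice path from u to v contained in τ. -/

import Mathlib

open Finset

abbrev Node : Type := ℤ × ℤ

/-- `v` is weakly southeast of `u` (product order). -/
def SE (u v : Node) : Prop := u.1 ≤ v.1 ∧ u.2 ≤ v.2

/-- `v` is weakly northeast of `u` (`u ↗ v`). -/
def NEr (u v : Node) : Prop := v.1 ≤ u.1 ∧ u.2 ≤ v.2

/-- `v` is strictly northeast of `u` (`u ⇗ v`). -/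
def SNE (u v : Node) : Prop := v.1 < u.1 ∧ u.2 < v.2

def IsSkew (τ : Finset Node) : Prop :=
  ∀ u ∈ τ, ∀ w ∈ τ, ∀ v : Node, SE u v → SE v w → v ∈ τ

def Adj (u v : Node) : Prop :=
  v = u + (1, 0) ∨ v = u + (-1, 0) ∨ v = u + (0, 1) ∨ v = u + (0, -1)

def PathIn (τ : Finset Node) (u v : Node) : Prop :=
  Relation.ReflTransGen (fun a b => a ∈ τ ∧ b ∈ τ ∧ Adj a b) u v

def IsConnectedShape (τ : Finset Node) : Prop :=
  ∀ u ∈ τ, ∀ v ∈ τ, PathIn τ u v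

def Cornered (τ : Finset Node) : Prop :=
  (∀ u ∈ τ, ∀ u' ∈ τ, (u + (1, 0) ∉ τ ∧ u + (0, -1) ∉ τ) →
      (u' + (1, 0) ∉ τ ∧ u' + (0, -1) ∉ τ) → u = u') ∧
  (∀ v ∈ τ, ∀ v' ∈ τ, (v + (-1, 0) ∉ τ ∧ v + (0, 1) ∉ τ) →
      (v' + (-1, 0) ∉ τ ∧ v' + (0, 1) ∉ τ) → v = v')

def DiagConvex (τ : Finset Node) : Prop :=
  ∀ u ∈ τ, ∀ w ∈ τ, ∀ v : Node,
    u.2 - u.1 = v.2 - v.1 → v.2 - v.1 = w.2 - w.1 → SE u v → SE v w → v ∈ τ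

def Thin (τ : Finset Node) : Prop :=
  ∀ u ∈ τ, ∀ v ∈ τ, u.2 - u.1 = v.2 - v.1 → u = v

def IsRibbon (ξ : Finset Node) : Prop :=
  ξ.Nonempty ∧ IsSkew ξ ∧ IsConnectedShape ξ ∧ Thin ξ

def MaxSW (τ : Finset Node) (u : Node) : Prop :=
  u ∈ τ ∧ ∀ v ∈ τ, NEr v u → v = u

def MaxNE (τ : Finset Node) (v : Node) : Prop :=
  v ∈ τ ∧ ∀ w ∈ τ, NEr v w → w = v

def IsNEPath (z : ℕ → Node) (k : ℕ) : Prop :=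
  ∀ i, i + 1 < k → z (i + 1) = z i + (-1, 0) ∨ z (i + 1) = z i + (0, 1)

def IsSEPath (z : ℕ → Node) (k : ℕ) : Prop :=
  ∀ i, i + 1 < k → z (i + 1) = z i + (1, 0) ∨ z (i + 1) = z i + (0, 1)

def SERemovable (τ μ : Finset Node) : Prop :=
  μ ⊆ τ ∧ ∀ u ∈ μ, ∀ v ∈ τ \ μ, ¬ SE u v

/-!
A skew shape is convex for the product order, so an S/E path between two of its nodes, being
monotone, never leaves it; conversely an S/E staircase can be routed through any node lying between
its endpoints, which gives convexity back from (i). Connectivity follows from (i) and (ii) because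
any two nodes are related by `↘` or `↗` in one order or the other. The substance is the N/E path in
a connected skew shape: from `u ≠ v` with `u ↗ v` one of the steps `u + (-1, 0)`, `u + (0, 1)` stays
in `τ` and `↗ v`. On a common row or column convexity provides it; otherwise `v` lies in the open
quadrant north-east of `u`, and the edge by which a path from `u` to `v` enters that quadrant has an
endpoint from which convexity forces one of the two steps into `τ`.
-/

lemma SE.trans {u v w : Node} (huv : SE u v) (hvw : SE v w) : SE u w :=
  ⟨huv.1.trans hvw.1, huv.2.trans hvw.2⟩

lemma Adj.symm {a b : Node} (h : Adj a b) : Adj b a := by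
  rcases h with rfl | rfl | rfl | rfl <;> simp [Adj, add_assoc]

lemma PathIn.symm {τ : Finset Node} {u v : Node} (h : PathIn τ u v) : PathIn τ v u := by
  induction h with
  | refl => exact .refl
  | tail _ hbc ih => exact .head ⟨hbc.2.1, hbc.1, hbc.2.2.symm⟩ ih

lemma pathIn_of_adj_steps {τ : Finset Node} {z : ℕ → Node} {k : ℕ}
    (hadj : ∀ i, i + 1 < k → Adj (z i) (z (i + 1))) (hmem : ∀ i < k, z i ∈ τ) (hk : 1 ≤ k) :
    PathIn τ (z 0) (z (k - 1)) := by
  suffices ∀ m < k, PathIn τ (z 0) (z m) from this (k - 1) (by omega)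
  intro m
  induction m with
  | zero => exact fun _ => .refl
  | succ m ih => exact fun hm => (ih (by omega)).tail ⟨hmem m (by omega), hmem (m + 1) hm, hadj m hm⟩

lemma PathIn.exists_adj_enter {τ : Finset Node} {u x : Node} (B : Node → Prop)
    (hp : PathIn τ u x) (hu : ¬ B u) (hx : B x) :
    ∃ w w', w ∈ τ ∧ w' ∈ τ ∧ Adj w w' ∧ ¬ B w ∧ B w' := by
  induction hp with
  | refl => exact absurd hx hu
  | @tail b c _ step ih =>
    by_cases hb : B b
    · exact ih hb
    · exact ⟨b, c, step.1, step.2.1, step.2.2, hb, hx⟩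

lemma IsSEPath.adj {z : ℕ → Node} {k : ℕ} (hz : IsSEPath z k) :
    ∀ i, i + 1 < k → Adj (z i) (z (i + 1)) := fun i hi =>
  (hz i hi).elim Or.inl (fun h => Or.inr (Or.inr (Or.inl h)))

lemma IsNEPath.adj {z : ℕ → Node} {k : ℕ} (hz : IsNEPath z k) :
    ∀ i, i + 1 < k → Adj (z i) (z (i + 1)) := fun i hi =>
  (hz i hi).elim (fun h => Or.inr (Or.inl h)) (fun h => Or.inr (Or.inr (Or.inl h)))

lemma IsSEPath.se_of_le {z : ℕ → Node} {k : ℕ} (hz : IsSEPath z k) {i j : ℕ} (hij : i ≤ j)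
    (hj : j < k) : SE (z i) (z j) := by
  induction j, hij using Nat.le_induction with
  | base => exact ⟨le_rfl, le_rfl⟩
  | succ j _ ih =>
    refine (ih (by omega)).trans ?_
    rcases hz j hj with h | h <;> rw [h] <;> simp [SE]

/-- An S/E staircase from `u` to `w` through `p`: along the first coordinate to `p.1`, along the
second to `w.2`, then along the first to `w.1`. -/
lemma exists_sePath_through {u p w : Node} (hup : SE u p) (hpw : SE p w) :
    ∃ (z : ℕ → Node) (k : ℕ), 1 ≤ k ∧ IsSEPath z k ∧ z 0 = u ∧ z (k - 1) = w ∧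
      ∃ j < k, z j = p := by
  obtain ⟨h₁, h₂⟩ := hup
  obtain ⟨h₃, h₄⟩ := hpw
  set A := (p.1 - u.1).toNat
  set B := (w.2 - u.2).toNat
  set C := (w.1 - p.1).toNat
  refine ⟨fun i => (u.1 + ↑(min i A + (i - (A + B))), u.2 + ↑(min (i - A) B)), A + B + C + 1,
    by omega, fun i _ => ?_, by simp, ?_, A + (p.2 - u.2).toNat, by omega, ?_⟩ <;>
    simp only [Prod.ext_iff, Prod.fst_add, Prod.snd_add] <;> omega

lemma exists_neStep_of_sne {τ : Finset Node} (hsk : IsSkew τ) (hconn : IsConnectedShape τ)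
    {u v : Node} (hu : u ∈ τ) (hv : v ∈ τ) (huv : SNE u v) :
    u + (-1, 0) ∈ τ ∨ u + (0, 1) ∈ τ := by
  obtain ⟨w, w', hw, -, hadj, hwB, hw'B⟩ :=
    (hconn u hu v hv).exists_adj_enter (fun x => SNE u x) (by simp [SNE]) huv
  simp only [SNE, not_and_or, not_lt] at hwB hw'B
  rcases hadj with rfl | rfl | rfl | rfl <;> simp only [Prod.fst_add, Prod.snd_add] at hw'B
  · omega
  · exact .inr (hsk u hu w hw _ (by simp [SE]) (by simp [SE]; omega))
  · exact .inl (hsk w hw u hu _ (by simp [SE]; omega) (by simp [SE]))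
  · omega

lemma exists_neStep {τ : Finset Node} (hsk : IsSkew τ) (hconn : IsConnectedShape τ)
    {u v : Node} (hu : u ∈ τ) (hv : v ∈ τ) (huv : NEr u v) (hne : u ≠ v) :
    ∃ u' ∈ τ, (u' = u + (-1, 0) ∨ u' = u + (0, 1)) ∧ NEr u' v := by
  obtain ⟨h₁, h₂⟩ := huv
  have step_west (h : u + (-1, 0) ∈ τ) (hlt : v.1 < u.1) :
      ∃ u' ∈ τ, (u' = u + (-1, 0) ∨ u' = u + (0, 1)) ∧ NEr u' v :=
    ⟨_, h, .inl rfl, by simp only [NEr, Prod.fst_add, Prod.snd_add]; omega⟩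
  have step_north (h : u + (0, 1) ∈ τ) (hlt : u.2 < v.2) :
      ∃ u' ∈ τ, (u' = u + (-1, 0) ∨ u' = u + (0, 1)) ∧ NEr u' v :=
    ⟨_, h, .inr rfl, by simp only [NEr, Prod.fst_add, Prod.snd_add]; omega⟩
  by_cases hcol : v.1 = u.1
  · have hlt : u.2 < v.2 := h₂.lt_of_ne fun h => hne (Prod.ext hcol.symm h)
    exact step_north (hsk u hu v hv _ (by simp [SE]) (by simp [SE]; omega)) hlt
  by_cases hrow : v.2 = u.2
  · exact step_west (hsk v hv u hu _ (by simp [SE]; omega) (by simp [SE])) (by omega)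
  rcases exists_neStep_of_sne hsk hconn hu hv ⟨by omega, by omega⟩ with h | h
  · exact step_west h (by omega)
  · exact step_north h (by omega)

def consPath (u : Node) (z : ℕ → Node) : ℕ → Node
  | 0 => u
  | i + 1 => z i

lemma IsNEPath.cons {z : ℕ → Node} {k : ℕ} {u : Node} (hz : IsNEPath z k)
    (hu : z 0 = u + (-1, 0) ∨ z 0 = u + (0, 1)) : IsNEPath (consPath u z) (k + 1) := by
  rintro (_ | i) hi
  · exact hu
  · exact hz i (by omega)

def SEPathConvex (τ : Finset Node) : Prop :=
  ∀ u ∈ τ, ∀ v ∈ τ, SE u v → ∀ (z : ℕ → Node) (k : ℕ), 1 ≤ k → IsSEPath z k → z 0 = u →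
    z (k - 1) = v → ∀ i < k, z i ∈ τ

def NEPathConnected (τ : Finset Node) : Prop :=
  ∀ u ∈ τ, ∀ v ∈ τ, NEr u v → ∃ (z : ℕ → Node) (k : ℕ), 1 ≤ k ∧ IsNEPath z k ∧ z 0 = u ∧
    z (k - 1) = v ∧ ∀ i < k, z i ∈ τ

lemma IsSkew.sePathConvex {τ : Finset Node} (hsk : IsSkew τ) : SEPathConvex τ := by
  intro u hu v hv _ z k hk hz hz0 hzk i hi
  refine hsk u hu v hv (z i) ?_ ?_
  · simpa [hz0] using hz.se_of_le (Nat.zero_le i) hi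
  · simpa [hzk] using hz.se_of_le (show i ≤ k - 1 by omega) (by omega)

lemma IsSkew.exists_nePath {τ : Finset Node} (hsk : IsSkew τ) (hconn : IsConnectedShape τ)
    (u : Node) (hu : u ∈ τ) (v : Node) (hv : v ∈ τ) (huv : NEr u v) :
    ∃ (z : ℕ → Node) (k : ℕ), 1 ≤ k ∧ IsNEPath z k ∧ z 0 = u ∧ z (k - 1) = v ∧
      ∀ i < k, z i ∈ τ := by
  by_cases hne : u = v
  · subst hne
    exact ⟨fun _ => u, 1, le_rfl, fun i hi => by omega, rfl, rfl, fun _ _ => hu⟩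
  obtain ⟨u', hu', hstep, hu'v⟩ := exists_neStep hsk hconn hu hv huv hne
  obtain ⟨z, k, hk, hz, hz0, hzk, hmem⟩ := hsk.exists_nePath hconn u' hu' v hv hu'v
  refine ⟨consPath u z, k + 1, by omega, hz.cons (hz0 ▸ hstep), rfl, ?_, ?_⟩
  · obtain ⟨k, rfl⟩ := Nat.exists_eq_add_of_le' hk
    exact hzk
  · rintro (_ | i) hi
    · exact hu
    · exact hmem i (by omega)
termination_by (u.1 - v.1 + (v.2 - u.2)).toNat
decreasing_by
  obtain ⟨h₁, h₂⟩ := huv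
  obtain ⟨h₃, h₄⟩ := hu'v
  rcases hstep with rfl | rfl <;> simp only [Prod.fst_add, Prod.snd_add] at h₃ h₄ ⊢ <;> omega

lemma SEPathConvex.isSkew {τ : Finset Node} (h : SEPathConvex τ) : IsSkew τ := by
  intro u hu w hw v huv hvw
  obtain ⟨z, k, hk, hz, hz0, hzk, j, hj, rfl⟩ := exists_sePath_through huv hvw
  exact h u hu w hw (huv.trans hvw) z k hk hz hz0 hzk j hj

lemma SEPathConvex.isConnectedShape {τ : Finset Node} (hSE : SEPathConvex τ)
    (hNE : NEPathConnected τ) : IsConnectedShape τ := by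
  have hse {u v} (hu : u ∈ τ) (hv : v ∈ τ) (huv : SE u v) : PathIn τ u v := by
    obtain ⟨z, k, hk, hz, rfl, rfl, -⟩ := exists_sePath_through huv ⟨le_rfl, le_rfl⟩
    exact pathIn_of_adj_steps hz.adj (hSE _ hu _ hv huv z k hk hz rfl rfl) hk
  have hne {u v} (hu : u ∈ τ) (hv : v ∈ τ) (huv : NEr u v) : PathIn τ u v := by
    obtain ⟨z, k, hk, hz, rfl, rfl, hmem⟩ := hNE u hu v hv huv
    exact pathIn_of_adj_steps hz.adj hmem hk
  intro u hu v hv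
  rcases le_total u.1 v.1 with h₁ | h₁ <;> rcases le_total u.2 v.2 with h₂ | h₂
  · exact hse hu hv ⟨h₁, h₂⟩
  · exact (hne hv hu ⟨h₁, h₂⟩).symm
  · exact hne hu hv ⟨h₁, h₂⟩
  · exact (hse hv hu ⟨h₁, h₂⟩).symm

theorem stmt2 (τ : Finset Node) :
    (IsSkew τ ∧ IsConnectedShape τ) ↔
      ((∀ u ∈ τ, ∀ v ∈ τ, SE u v →
          ∀ (z : ℕ → Node) (k : ℕ), 1 ≤ k → IsSEPath z k → z 0 = u →
            z (k - 1) = v → ∀ i < k, z i ∈ τ) ∧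
       (∀ u ∈ τ, ∀ v ∈ τ, NEr u v →
          ∃ (z : ℕ → Node) (k : ℕ), 1 ≤ k ∧ IsNEPath z k ∧ z 0 = u ∧
            z (k - 1) = v ∧ ∀ i < k, z i ∈ τ)) :=
  show IsSkew τ ∧ IsConnectedShape τ ↔ SEPathConvex τ ∧ NEPathConnected τ from
    ⟨fun ⟨hsk, hconn⟩ => ⟨hsk.sePathConvex, hsk.exists_nePath hconn⟩,
      fun ⟨hSE, hNE⟩ => ⟨hSE.isSkew, hSE.isConnectedShape hNE⟩⟩
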